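/- arXiv:1110.1961 — 3 statements merged into one kernel-verified Lean document; each statement's English description precedes it below -/
import Mathlib

section
/- Let A be a finite subset of an abelian group G with |A| ≥ 5 and |2∧A| ≥ |A|. Then there is a subset B ⊆ A with |B| = ⌊(|A| + 3)/2⌋ such that |2∧B| ≥ |A|. -/
/-!
For `v ∈ 2∧A` the pairs `{x, y} ⊆ A` with `x + y = v` are pairwise disjoint, so they extend to a
matching `M` of `⌊n/2⌋` pairs in `A` (`n = |A|`). Since `k = ⌊(n+3)/2⌋ > n - ⌊n/2⌋`, every
`k`-subset of `A` contains a pair of `M`. Permutations of `A` preserving `M` show that the number of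
`k`-subsets containing one of `r` given pairs of `M` depends only on `r`; averaging over the
`r`-subsets of `M` then shows that at least a fraction `r/⌊n/2⌋` of all `k`-subsets contain one of
the `r` representations of `v`. Summing over `v`, the average of `|2∧B|` over `k`-subsets `B` is at
least `C(n,2)/⌊n/2⌋ ≥ n - 1`, and in fact larger: either some `v` has fewer than `⌊n/2⌋`
representations, and its bound is strict because a `k`-subset can contain two pairs of `M`, or all
have `⌊n/2⌋`, and then `|2∧A| ≥ n` gives `C(n,2) ≥ n⌊n/2⌋`.
-/

open Finset Pointwise

/-- The set of sums of two distinct elements of `A`. -/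
def twoSum {G : Type*} [AddCommGroup G] [DecidableEq G] (A : Finset G) : Finset G :=
  ((A ×ˢ A).filter fun p => p.1 ≠ p.2).image fun p => p.1 + p.2

def IsMatching {α : Type*} (A : Finset α) (M : Finset (Finset α)) : Prop :=
  (∀ e ∈ M, e ⊆ A ∧ e.card = 2) ∧ (M : Set (Finset α)).PairwiseDisjoint id

def coverCount {α : Type*} [DecidableEq α] (A : Finset α) (k : ℕ) (I : Finset (Finset α)) : ℕ :=
  #{B ∈ A.powersetCard k | ∃ e ∈ I, e ⊆ B}

theorem Nat.mul_choose_pred_add_mul_choose (n r : ℕ) :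
    n * (n - 1).choose r + r * n.choose r = n * n.choose r := by
  rcases n with _ | m
  · rcases r with _ | r <;> simp
  rcases le_or_gt r (m + 1) with hr | hr
  · have h := Nat.choose_mul_succ_eq m r
    rw [Nat.add_sub_cancel, mul_comm, h, mul_comm r, ← Nat.mul_add, Nat.sub_add_cancel hr,
      mul_comm]
  · simp [Nat.choose_eq_zero_of_lt hr, Nat.choose_eq_zero_of_lt (by omega : m < r)]

theorem Nat.choose_lt_succ_choose {n r : ℕ} (hr : 0 < r) (hrn : r ≤ n + 1) :
    n.choose r < (n + 1).choose r := by
  obtain ⟨r, rfl⟩ : ∃ r', r = r' + 1 := ⟨r - 1, by omega⟩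
  rw [Nat.choose_succ_succ']
  exact Nat.lt_add_of_pos_left (Nat.choose_pos (by omega))

theorem Nat.div_two_mul_sub_one_le_choose_two (n : ℕ) : n / 2 * (n - 1) ≤ n.choose 2 := by
  rw [Nat.choose_two_right, Nat.le_div_iff_mul_le two_pos, mul_right_comm]
  exact Nat.mul_le_mul_right _ (Nat.div_mul_le_self n 2)

namespace IsMatching

variable {α : Type*} [DecidableEq α] {A B : Finset α} {M : Finset (Finset α)}

theorem biUnion_subset (hM : IsMatching A M) : M.biUnion id ⊆ A :=
  Finset.biUnion_subset.2 fun e he => (hM.1 e he).1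

theorem card_biUnion (hM : IsMatching A M) : (M.biUnion id).card = 2 * M.card := by
  rw [Finset.card_biUnion hM.2,
    sum_congr rfl fun e he => show (id e).card = 2 from (hM.1 e he).2, sum_const, smul_eq_mul,
    mul_comm]

theorem two_mul_card_le (hM : IsMatching A M) : 2 * M.card ≤ A.card :=
  hM.card_biUnion ▸ card_le_card hM.biUnion_subset

theorem insert_of_subset_sdiff {e : Finset α} (hM : IsMatching A M) (he : e ⊆ A \ M.biUnion id)
    (he2 : e.card = 2) : IsMatching A (insert e M) := by
  refine ⟨fun g hg => ?_, ?_⟩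
  · rcases mem_insert.1 hg with rfl | hg
    · exact ⟨he.trans sdiff_subset, he2⟩
    · exact hM.1 g hg
  · rw [coe_insert]
    refine hM.2.insert fun g hg _ => disjoint_left.2 fun x hxe hxg => ?_
    exact (mem_sdiff.1 (he hxe)).2 (mem_biUnion.2 ⟨g, hg, hxg⟩)

theorem exists_superset_card_eq (hM : IsMatching A M) {m : ℕ} (hm : M.card ≤ m)
    (hmA : 2 * m ≤ A.card) : ∃ M', M ⊆ M' ∧ IsMatching A M' ∧ M'.card = m := by
  induction m with
  | zero => exact ⟨M, subset_rfl, hM, by omega⟩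
  | succ m ih =>
    rcases hm.eq_or_lt with hm | hm
    · exact ⟨M, subset_rfl, hM, hm⟩
    obtain ⟨M', hMM', hM', hcard⟩ := ih (by omega) (by omega)
    have hfree : 1 < (A \ M'.biUnion id).card := by
      rw [card_sdiff_of_subset hM'.biUnion_subset, hM'.card_biUnion]
      omega
    obtain ⟨x, hx, y, hy, hxy⟩ := one_lt_card.1 hfree
    have hxy_sub : {x, y} ⊆ A \ M'.biUnion id := insert_subset hx (singleton_subset_iff.2 hy)
    have hnew : {x, y} ∉ M' := fun h =>
      (mem_sdiff.1 hx).2 (mem_biUnion.2 ⟨_, h, mem_insert_self x {y}⟩)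
    exact ⟨_, hMM'.trans (subset_insert _ _), hM'.insert_of_subset_sdiff hxy_sub (card_pair hxy),
      by rw [card_insert_of_notMem hnew, hcard]⟩

/-- Each edge avoided by `B` has a point outside `B`, and these points are distinct. -/
theorem exists_subset_of_card_lt (hM : IsMatching A M) (hB : B ⊆ A)
    (h : A.card < M.card + B.card) : ∃ e ∈ M, e ⊆ B := by
  by_contra! hno
  have hle : M.card ≤ (M.biUnion (· \ B)).card :=
    card_le_card_biUnion (hM.2.mono fun e => sdiff_subset)
      fun e he => sdiff_nonempty.2 (hno e he)
  have hsub : M.biUnion (· \ B) ⊆ A \ B :=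
    Finset.biUnion_subset.2 fun e he => sdiff_subset_sdiff (hM.1 e he).1 le_rfl
  have := card_le_card hsub
  rw [card_sdiff_of_subset hB] at this
  have := card_le_card hB
  omega

end IsMatching

section coverCount

variable {α : Type*} [DecidableEq α] {A : Finset α} {k : ℕ} {M I J : Finset (Finset α)}

theorem coverCount_le_of_perm (σ : Equiv.Perm α) (hσA : ∀ x ∈ A, σ x ∈ A)
    (hIJ : ∀ e ∈ I, e.image σ ∈ J) : coverCount A k I ≤ coverCount A k J := by
  refine card_le_card_of_injOn (·.image σ) (fun B hB => ?_) (image_injective σ.injective).injOn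
  simp only [coe_filter, Set.mem_ofPred_eq, mem_powersetCard] at hB ⊢
  obtain ⟨⟨hBA, hBk⟩, e, he, heB⟩ := hB
  exact ⟨⟨fun y hy => by obtain ⟨x, hx, rfl⟩ := mem_image.1 hy; exact hσA x (hBA hx),
    by rw [card_image_of_injective _ σ.injective, hBk]⟩, _, hIJ e he, image_subset_image heB⟩

/-- Exchanging the two edges `e = {a, b}` and `f = {c, d}` by the permutation `(a c)(b d)`. -/
theorem IsMatching.coverCount_insert_le (hM : IsMatching A M) {e f : Finset α} (he : e ∈ M)
    (hf : f ∈ M) (hef : e ≠ f) (hIM : I ⊆ M) (heI : e ∉ I) (hfI : f ∉ I) :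
    coverCount A k (insert e I) ≤ coverCount A k (insert f I) := by
  obtain ⟨a, b, hab, rfl⟩ := card_eq_two.1 (hM.1 _ he).2
  obtain ⟨c, d, hcd, rfl⟩ := card_eq_two.1 (hM.1 _ hf).2
  have hdisj : Disjoint {a, b} {c, d} := hM.2 he hf hef
  simp only [disjoint_insert_left, disjoint_insert_right, disjoint_singleton,
    mem_insert, mem_singleton, not_or] at hdisj
  obtain ⟨⟨hca, hcb⟩, had, hbd⟩ := hdisj
  set σ := Equiv.swap a c * Equiv.swap b d
  have hfix : ∀ x, x ≠ a → x ≠ b → x ≠ c → x ≠ d → σ x = x := fun x h₁ h₂ h₃ h₄ => by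
    simp [σ, Equiv.swap_apply_of_ne_of_ne, *]
  have hσa : σ a = c := by simp [σ, Equiv.swap_apply_of_ne_of_ne, hab, had]
  have hσb : σ b = d := by simp [σ, Equiv.swap_apply_of_ne_of_ne, Ne.symm had, Ne.symm hcd]
  have hσc : σ c = a := by simp [σ, Equiv.swap_apply_of_ne_of_ne, hcb, hcd]
  have hσd : σ d = b := by simp [σ, Equiv.swap_apply_of_ne_of_ne, Ne.symm hab, Ne.symm hcb]
  have hfixI : ∀ g ∈ I, g.image σ = g := by
    intro g hg
    have hge : Disjoint g {a, b} := hM.2 (hIM hg) he (ne_of_mem_of_not_mem hg heI)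
    have hgf : Disjoint g {c, d} := hM.2 (hIM hg) hf (ne_of_mem_of_not_mem hg hfI)
    refine (image_congr fun x hx => ?_).trans image_id
    have hxe := disjoint_left.1 hge hx
    have hxf := disjoint_left.1 hgf hx
    simp only [mem_insert, mem_singleton, not_or] at hxe hxf
    exact hfix x hxe.1 hxe.2 hxf.1 hxf.2
  refine coverCount_le_of_perm σ (fun x hx => ?_) fun g hg => ?_
  · have hab' := (hM.1 _ he).1
    have hcd' := (hM.1 _ hf).1
    simp only [insert_subset_iff, singleton_subset_iff] at hab' hcd'
    by_cases hx' : x = a ∨ x = b ∨ x = c ∨ x = d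
    · rcases hx' with rfl | rfl | rfl | rfl <;> simp only [hσa, hσb, hσc, hσd] <;> tauto
    · push Not at hx'
      rwa [hfix x hx'.1 hx'.2.1 hx'.2.2.1 hx'.2.2.2]
  · rcases mem_insert.1 hg with rfl | hg
    · simp [image_insert, hσa, hσb]
    · exact mem_insert_of_mem (by rwa [hfixI g hg])

theorem IsMatching.coverCount_eq_of_card_eq (hM : IsMatching A M) (hI : I ⊆ M) (hJ : J ⊆ M)
    (hIJ : I.card = J.card) : coverCount A k I = coverCount A k J := by
  induction h : (I \ J).card generalizing I with
  | zero =>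
    rw [card_eq_zero, sdiff_eq_empty_iff_subset] at h
    rw [eq_of_subset_of_card_le h hIJ.ge]
  | succ n ih =>
    obtain ⟨e, he⟩ : (I \ J).Nonempty := card_pos.1 (by omega)
    obtain ⟨f, hf⟩ : (J \ I).Nonempty :=
      card_pos.1 (by rw [← card_sdiff_eq_card_sdiff_iff.2 hIJ]; omega)
    rw [mem_sdiff] at he hf
    have hK : I.erase e ⊆ M := (erase_subset e I).trans hI
    have heK : e ∉ I.erase e := notMem_erase e I
    have hfK : f ∉ I.erase e := fun h => hf.2 (mem_of_mem_erase h)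
    have hef : e ≠ f := fun h => hf.2 (h ▸ he.1)
    have hswap : coverCount A k I = coverCount A k (insert f (I.erase e)) := by
      conv_lhs => rw [← insert_erase he.1]
      exact le_antisymm (hM.coverCount_insert_le (hI he.1) (hJ hf.1) hef hK heK hfK)
        (hM.coverCount_insert_le (hJ hf.1) (hI he.1) hef.symm hK hfK heK)
    rw [hswap]
    refine ih (insert_subset (hJ hf.1) hK) ?_ ?_
    · rw [card_insert_of_notMem hfK, card_erase_of_mem he.1, ← hIJ]
      have := card_pos.2 ⟨e, he.1⟩
      omega
    · rw [insert_sdiff_of_mem _ hf.1, erase_sdiff_comm, card_erase_of_mem (mem_sdiff.2 he), h]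
      rfl

theorem sum_coverCount_add_sum_choose (A : Finset α) (k r : ℕ) (M : Finset (Finset α)) :
    ∑ I ∈ M.powersetCard r, coverCount A k I +
        ∑ B ∈ A.powersetCard k, (#{e ∈ M | ¬e ⊆ B}).choose r =
      #(A.powersetCard k) * M.card.choose r := by
  have hswap : ∑ I ∈ M.powersetCard r, coverCount A k I =
      ∑ B ∈ A.powersetCard k, #{I ∈ M.powersetCard r | ∃ e ∈ I, e ⊆ B} := by
    simp only [coverCount, card_filter]
    exact sum_comm
  rw [hswap, ← sum_add_distrib, ← smul_eq_mul, ← sum_const]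
  refine sum_congr rfl fun B _ => ?_
  have hnot : {I ∈ M.powersetCard r | ¬∃ e ∈ I, e ⊆ B} = {e ∈ M | ¬e ⊆ B}.powersetCard r := by
    ext I
    simp only [mem_filter, mem_powersetCard, not_exists, not_and]
    constructor
    · rintro ⟨⟨hIM, hIr⟩, hno⟩
      exact ⟨fun e he => mem_filter.2 ⟨hIM he, hno e he⟩, hIr⟩
    · rintro ⟨hIM, hIr⟩
      exact ⟨⟨hIM.trans (filter_subset _ _), hIr⟩, fun e he => (mem_filter.1 (hIM he)).2⟩
  rw [← card_powersetCard r M, ← card_powersetCard r (filter _ M), ← hnot]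
  exact card_filter_add_card_filter_not _

/-- Double counting pairs `(I, B)` with `I` an `r`-subset of `M`, all of which have the same
`coverCount`. -/
theorem IsMatching.choose_mul_coverCount_add (hM : IsMatching A M) (hI : I ⊆ M) :
    M.card.choose I.card * (M.card * coverCount A k I) +
        M.card * ∑ B ∈ A.powersetCard k, (#{e ∈ M | ¬e ⊆ B}).choose I.card =
      M.card.choose I.card * (I.card * #(A.powersetCard k)) +
        M.card * (#(A.powersetCard k) * (M.card - 1).choose I.card) := by
  have hcount := sum_coverCount_add_sum_choose A k I.card M
  rw [sum_congr rfl fun J hJ => hM.coverCount_eq_of_card_eq (mem_powersetCard.1 hJ).1 hI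
    (mem_powersetCard.1 hJ).2, sum_const, card_powersetCard, smul_eq_mul] at hcount
  have hchoose := Nat.mul_choose_pred_add_mul_choose M.card I.card
  calc _ = M.card * (M.card.choose I.card * coverCount A k I +
          ∑ B ∈ A.powersetCard k, (#{e ∈ M | ¬e ⊆ B}).choose I.card) := by ring
    _ = #(A.powersetCard k) * (M.card * M.card.choose I.card) := by rw [hcount]; ring
    _ = _ := by rw [← hchoose]; ring

theorem IsMatching.card_filter_not_subset_lt (hM : IsMatching A M) (hk : A.card < M.card + k)
    {B : Finset α} (hB : B ∈ A.powersetCard k) : #{e ∈ M | ¬e ⊆ B} < M.card := by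
  rw [mem_powersetCard] at hB
  obtain ⟨e, he, heB⟩ := hM.exists_subset_of_card_lt hB.1 (by omega)
  exact card_lt_card (filter_ssubset.2 ⟨e, he, not_not.2 heB⟩)

theorem IsMatching.choose_card_filter_not_subset_le (hM : IsMatching A M)
    (hk : A.card < M.card + k) {B : Finset α} (hB : B ∈ A.powersetCard k) (r : ℕ) :
    (#{e ∈ M | ¬e ⊆ B}).choose r ≤ (M.card - 1).choose r :=
  Nat.choose_le_choose r (Nat.le_sub_one_of_lt (hM.card_filter_not_subset_lt hk hB))

theorem IsMatching.card_mul_le_coverCount (hM : IsMatching A M) (hk : A.card < M.card + k)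
    (hI : I ⊆ M) : I.card * #(A.powersetCard k) ≤ M.card * coverCount A k I := by
  have hsum : ∑ B ∈ A.powersetCard k, (#{e ∈ M | ¬e ⊆ B}).choose I.card ≤
      #(A.powersetCard k) * (M.card - 1).choose I.card := by
    rw [← smul_eq_mul, ← sum_const]
    exact sum_le_sum fun B hB => hM.choose_card_filter_not_subset_le hk hB _
  have := Nat.mul_le_mul_left M.card hsum
  have := hM.choose_mul_coverCount_add (k := k) hI
  exact le_of_mul_le_mul_left (by linarith) (Nat.choose_pos (card_le_card hI))

theorem IsMatching.card_mul_lt_coverCount (hM : IsMatching A M) (hk : A.card < M.card + k)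
    (hI : I ⊆ M) (hI₀ : 0 < I.card) (hIM : I.card < M.card) {B e f : Finset α}
    (hB : B ∈ A.powersetCard k) (he : e ∈ M) (hf : f ∈ M) (hef : e ≠ f) (heB : e ⊆ B)
    (hfB : f ⊆ B) : I.card * #(A.powersetCard k) < M.card * coverCount A k I := by
  have hB₂ : #{g ∈ M | ¬g ⊆ B} ≤ M.card - 2 := by
    have hsub : {g ∈ M | ¬g ⊆ B} ⊆ (M.erase e).erase f := fun g hg => by
      rw [mem_filter] at hg
      refine mem_erase.2 ⟨?_, mem_erase.2 ⟨?_, hg.1⟩⟩ <;> rintro rfl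
      exacts [hg.2 hfB, hg.2 heB]
    have := card_le_card hsub
    rwa [card_erase_of_mem (mem_erase.2 ⟨hef.symm, hf⟩), card_erase_of_mem he] at this
  have hsum : ∑ B ∈ A.powersetCard k, (#{e ∈ M | ¬e ⊆ B}).choose I.card <
      #(A.powersetCard k) * (M.card - 1).choose I.card := by
    rw [← smul_eq_mul, ← sum_const]
    refine sum_lt_sum (fun B hB => hM.choose_card_filter_not_subset_le hk hB _) ⟨B, hB, ?_⟩
    have hIM' : I.card ≤ M.card - 2 + 1 := by omega
    calc (#{g ∈ M | ¬g ⊆ B}).choose I.card ≤ (M.card - 2).choose I.card :=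
          Nat.choose_le_choose _ hB₂
      _ < (M.card - 2 + 1).choose I.card :=
          Nat.choose_lt_succ_choose hI₀ hIM'
      _ = (M.card - 1).choose I.card := by rw [show M.card - 2 + 1 = M.card - 1 by omega]
  have := Nat.mul_lt_mul_of_pos_left hsum (card_pos.2 ⟨e, he⟩)
  have := hM.choose_mul_coverCount_add (k := k) hI
  exact lt_of_mul_lt_mul_left (by linarith) (Nat.zero_le (M.card.choose I.card))

end coverCount

section twoSum

variable {G : Type*} [AddCommGroup G] [DecidableEq G] {A B : Finset G} {v : G}

theorem mem_twoSum : v ∈ twoSum A ↔ ∃ x ∈ A, ∃ y ∈ A, x ≠ y ∧ x + y = v := by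
  simp [twoSum, and_assoc]

theorem twoSum_mono (h : A ⊆ B) : twoSum A ⊆ twoSum B := fun v hv => by
  obtain ⟨x, hx, y, hy, hxy, rfl⟩ := mem_twoSum.1 hv
  exact mem_twoSum.2 ⟨x, h hx, y, h hy, hxy, rfl⟩

def sumPairs (A : Finset G) (v : G) : Finset (Finset G) :=
  {e ∈ A.powersetCard 2 | e.sum id = v}

theorem mem_sumPairs {e : Finset G} :
    e ∈ sumPairs A v ↔ ∃ x ∈ A, ∃ y ∈ A, x ≠ y ∧ x + y = v ∧ e = {x, y} := by
  simp only [sumPairs, mem_filter, mem_powersetCard, card_eq_two]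
  constructor
  · rintro ⟨⟨heA, x, y, hxy, rfl⟩, rfl⟩
    exact ⟨x, heA (by simp), y, heA (by simp), hxy, by simp [sum_pair hxy], rfl⟩
  · rintro ⟨x, hx, y, hy, hxy, rfl, rfl⟩
    exact ⟨⟨by simp [insert_subset_iff, hx, hy], x, y, hxy, rfl⟩, by simp [sum_pair hxy]⟩

theorem eq_pair_sub_of_mem_sumPairs {e : Finset G} (he : e ∈ sumPairs A v) {x : G}
    (hx : x ∈ e) : e = {x, v - x} := by
  obtain ⟨a, -, b, -, -, rfl, rfl⟩ := mem_sumPairs.1 he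
  rcases mem_insert.1 hx with rfl | hx
  · rw [add_sub_cancel_left]
  · rw [mem_singleton.1 hx, add_sub_cancel_right, pair_comm]

theorem isMatching_sumPairs (A : Finset G) (v : G) : IsMatching A (sumPairs A v) := by
  refine ⟨fun e he => mem_powersetCard.1 (mem_filter.1 he).1, fun e he f hf hef => ?_⟩
  refine disjoint_left.2 fun x hxe hxf => hef ?_
  rw [eq_pair_sub_of_mem_sumPairs he hxe, eq_pair_sub_of_mem_sumPairs hf hxf]

theorem mem_twoSum_iff_exists_sumPairs (hB : B ⊆ A) :
    v ∈ twoSum B ↔ ∃ e ∈ sumPairs A v, e ⊆ B := by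
  rw [mem_twoSum]
  constructor
  · rintro ⟨x, hx, y, hy, hxy, rfl⟩
    exact ⟨{x, y}, mem_sumPairs.2 ⟨x, hB hx, y, hB hy, hxy, rfl, rfl⟩,
      insert_subset hx (singleton_subset_iff.2 hy)⟩
  · rintro ⟨e, he, heB⟩
    obtain ⟨x, -, y, -, hxy, rfl, rfl⟩ := mem_sumPairs.1 he
    exact ⟨x, heB (mem_insert_self x {y}), y, heB (by simp), hxy, rfl⟩

theorem sum_card_sumPairs (A : Finset G) :
    ∑ v ∈ twoSum A, #(sumPairs A v) = A.card.choose 2 := by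
  rw [← card_powersetCard, card_eq_sum_card_fiberwise (f := fun e => e.sum id) (t := twoSum A)]
  · rfl
  · intro e he
    obtain ⟨x, y, hxy, rfl⟩ := card_eq_two.1 (mem_powersetCard.1 he).2
    have hA := (mem_powersetCard.1 he).1
    exact mem_twoSum.2 ⟨x, hA (by simp), y, hA (by simp), hxy, by simp [sum_pair hxy]⟩

theorem card_filter_mem_twoSum (k : ℕ) (v : G) :
    #{B ∈ A.powersetCard k | v ∈ twoSum B} = coverCount A k (sumPairs A v) :=
  congrArg card <| filter_congr fun _ hB =>
    mem_twoSum_iff_exists_sumPairs (mem_powersetCard.1 hB).1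

theorem sum_card_twoSum_powersetCard (A : Finset G) (k : ℕ) :
    ∑ B ∈ A.powersetCard k, #(twoSum B) =
      ∑ v ∈ twoSum A, #{B ∈ A.powersetCard k | v ∈ twoSum B} := by
  calc ∑ B ∈ A.powersetCard k, #(twoSum B)
      = ∑ B ∈ A.powersetCard k, #{v ∈ twoSum A | v ∈ twoSum B} :=
        sum_congr rfl fun B hB => by
          rw [filter_mem_eq_inter, inter_eq_right.2 (twoSum_mono (mem_powersetCard.1 hB).1)]
    _ = _ := by
        simp only [card_filter]
        exact sum_comm

theorem exists_isMatching_superset_sumPairs (A : Finset G) (v : G) :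
    ∃ M, sumPairs A v ⊆ M ∧ IsMatching A M ∧ M.card = A.card / 2 := by
  have := (isMatching_sumPairs A v).two_mul_card_le
  exact (isMatching_sumPairs A v).exists_superset_card_eq (by omega) (by omega)

theorem card_sumPairs_mul_le {k : ℕ} (hk : A.card < A.card / 2 + k) (v : G) :
    #(sumPairs A v) * #(A.powersetCard k) ≤
      A.card / 2 * #{B ∈ A.powersetCard k | v ∈ twoSum B} := by
  obtain ⟨M, hsub, hM, hMcard⟩ := exists_isMatching_superset_sumPairs A v
  rw [card_filter_mem_twoSum, ← hMcard]
  exact hM.card_mul_le_coverCount (hMcard ▸ hk) hsub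

theorem card_sumPairs_mul_lt {k : ℕ} (hk : A.card < A.card / 2 + k) (hk₄ : 4 ≤ k)
    (hkA : k ≤ A.card) (hv : v ∈ twoSum A) (hlt : #(sumPairs A v) < A.card / 2) :
    #(sumPairs A v) * #(A.powersetCard k) <
      A.card / 2 * #{B ∈ A.powersetCard k | v ∈ twoSum B} := by
  obtain ⟨M, hsub, hM, hMcard⟩ := exists_isMatching_superset_sumPairs A v
  obtain ⟨e₀, he₀, -⟩ := (mem_twoSum_iff_exists_sumPairs subset_rfl).1 hv
  have hpos : 0 < #(sumPairs A v) := card_pos.2 ⟨e₀, he₀⟩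
  obtain ⟨e, he, f, hf, hef⟩ := one_lt_card.1 (show 1 < M.card by omega)
  have hdisj : Disjoint e f := hM.2 he hf hef
  have hcard : (e ∪ f).card = 4 := by
    rw [card_union_of_disjoint hdisj, (hM.1 e he).2, (hM.1 f hf).2]
  obtain ⟨B, hefB, hBA, hBk⟩ :=
    exists_subsuperset_card_eq (union_subset (hM.1 e he).1 (hM.1 f hf).1) (hcard ▸ hk₄) hkA
  rw [card_filter_mem_twoSum, ← hMcard]
  exact hM.card_mul_lt_coverCount (hMcard ▸ hk) hsub hpos (hMcard ▸ hlt)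
    (mem_powersetCard.2 ⟨hBA, hBk⟩) he hf hef (subset_union_left.trans hefB)
    (subset_union_right.trans hefB)

theorem choose_two_mul_le_sum_card_twoSum {k : ℕ} (hk : A.card < A.card / 2 + k) :
    A.card.choose 2 * #(A.powersetCard k) ≤
      A.card / 2 * ∑ B ∈ A.powersetCard k, #(twoSum B) := by
  rw [← sum_card_sumPairs, sum_card_twoSum_powersetCard, sum_mul, mul_sum]
  exact sum_le_sum fun v _ => card_sumPairs_mul_le hk v

theorem choose_two_mul_lt_sum_card_twoSum {k : ℕ} (hk : A.card < A.card / 2 + k)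
    (hk₄ : 4 ≤ k) (hkA : k ≤ A.card) (hv : v ∈ twoSum A) (hlt : #(sumPairs A v) < A.card / 2) :
    A.card.choose 2 * #(A.powersetCard k) <
      A.card / 2 * ∑ B ∈ A.powersetCard k, #(twoSum B) := by
  rw [← sum_card_sumPairs, sum_card_twoSum_powersetCard, sum_mul, mul_sum]
  exact sum_lt_sum (fun v _ => card_sumPairs_mul_le hk v)
    ⟨v, hv, card_sumPairs_mul_lt hk hk₄ hkA hv hlt⟩

end twoSum

theorem stmt9 {G : Type*} [AddCommGroup G] [DecidableEq G] (A : Finset G)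
    (hA : 5 ≤ A.card) (h : A.card ≤ (twoSum A).card) :
    ∃ B ⊆ A, B.card = (A.card + 3) / 2 ∧ A.card ≤ (twoSum B).card := by
  by_contra! hcon
  set k := (A.card + 3) / 2
  set N := #(A.powersetCard k)
  have hk : A.card < A.card / 2 + k := by omega
  have hN : 0 < N := card_pos.2 (powersetCard_nonempty.2 (by omega))
  have hupper : ∑ B ∈ A.powersetCard k, #(twoSum B) ≤ N * (A.card - 1) := by
    rw [← smul_eq_mul, ← sum_const]
    exact sum_le_sum fun B hB =>
      Nat.le_sub_one_of_lt (hcon B (mem_powersetCard.1 hB).1 (mem_powersetCard.1 hB).2)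
  replace hupper := Nat.mul_le_mul_left (A.card / 2) hupper
  by_cases hsmall : ∃ v ∈ twoSum A, #(sumPairs A v) < A.card / 2
  · obtain ⟨v, hv, hlt⟩ := hsmall
    have hlower := choose_two_mul_lt_sum_card_twoSum hk (by omega) (by omega) hv hlt
    have := Nat.mul_le_mul_right N (Nat.div_two_mul_sub_one_le_choose_two A.card)
    linarith
  · push Not at hsmall
    have hmany : A.card * (A.card / 2) ≤ A.card.choose 2 := calc
      _ ≤ #(twoSum A) * (A.card / 2) := Nat.mul_le_mul_right _ h
      _ ≤ _ := sum_card_sumPairs A ▸ card_nsmul_le_sum _ _ _ hsmall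
    have hlower := choose_two_mul_le_sum_card_twoSum hk
    have := Nat.mul_le_mul_right N hmany
    have : A.card / 2 * N * A.card ≤ A.card / 2 * N * (A.card - 1) := by linarith
    have := Nat.le_of_mul_le_mul_left this (Nat.mul_pos (by omega) hN)
    omega
end

section
/- Let Q be a coset of a finite subgroup H of an abelian group G and let 1 ≤ k ≤ |Q| − 1. Then k∧Q equals the coset kQ (the coset of H consisting of sums of k elements of Q), unless k ∈ {2, |Q| − 2} and H is an elementary 2-subgroup, in which case k∧Q contains all but exactly one element of kQ. -/
open Finset Pointwise

/-- The set of sums of `k` distinct elements of `A`. -/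
def nSum {G : Type*} [AddCommGroup G] [DecidableEq G] (k : ℕ) (A : Finset G) : Finset G :=
  (A.powersetCard k).image fun B => B.sum id

/-!
Sums of `k` elements of the coset `Q = g + H` lie in `kg + H`; the point is the converse.
Passing to complements in `Q` sends `k∧Q` to `∑Q - (|Q| - k)∧Q`, so one may assume `2k ≤ |Q|`.
For `k = 2`, an element `c ≠ 2g` of `2g + H` is `g + (c - g)`, and `2g = (g + h) + (g - h)`
is a sum of two distinct elements of `Q` exactly when some `h ∈ H` has `2h ≠ 0`.
For `k ≥ 3`, peel off elements one at a time from a subset `A ⊆ Q` with `|Q| + 2k ≤ 2|A|`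
down to `k = 3`, where counting pairs `(x, y) ∈ A²` yields distinct `x, y, c - x - y ∈ A`.
-/

section SumsOfDistinctElements

variable {G : Type*} [AddCommGroup G] [DecidableEq G] {A : Finset G} {k : ℕ} {a b c : G}

lemma mem_nSum : c ∈ nSum k A ↔ ∃ B ⊆ A, B.card = k ∧ B.sum id = c := by
  simp only [nSum, mem_image, mem_powersetCard, and_assoc]

lemma mem_nSum_one : c ∈ nSum 1 A ↔ c ∈ A := by
  simp only [mem_nSum, card_eq_one]
  constructor
  · rintro ⟨B, hB, ⟨x, rfl⟩, rfl⟩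
    simpa using hB
  · exact fun hc => ⟨{c}, singleton_subset_iff.2 hc, ⟨c, rfl⟩, sum_singleton id c⟩

lemma add_mem_nSum_succ (ha : a ∈ A) (hc : c ∈ nSum k (A.erase a)) : a + c ∈ nSum (k + 1) A := by
  obtain ⟨B, hB, rfl, rfl⟩ := mem_nSum.1 hc
  have haB : a ∉ B := fun h => (mem_erase.1 (hB h)).1 rfl
  exact mem_nSum.2 ⟨insert a B, insert_subset ha (hB.trans (erase_subset a A)),
    card_insert_of_notMem haB, sum_insert haB⟩

lemma add_mem_nSum_two (ha : a ∈ A) (hb : b ∈ A) (hab : a ≠ b) : a + b ∈ nSum 2 A :=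
  add_mem_nSum_succ ha (mem_nSum_one.2 (mem_erase.2 ⟨hab.symm, hb⟩))

lemma mem_nSum_two : c ∈ nSum 2 A ↔ ∃ a ∈ A, ∃ b ∈ A, a ≠ b ∧ a + b = c := by
  constructor
  · rw [mem_nSum]
    rintro ⟨B, hB, hcard, rfl⟩
    obtain ⟨a, b, hab, rfl⟩ := card_eq_two.1 hcard
    exact ⟨a, hB (mem_insert_self a _), b, hB (by simp), hab, (sum_pair (f := id) hab).symm⟩
  · rintro ⟨a, ha, b, hb, hab, rfl⟩
    exact add_mem_nSum_two ha hb hab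

lemma mem_nSum_card_sub (hk : k ≤ A.card) : c ∈ nSum (A.card - k) A ↔ A.sum id - c ∈ nSum k A := by
  have compl : ∀ {j : ℕ} {B : Finset G}, B ⊆ A → B.card = j →
      A.sum id - B.sum id ∈ nSum (A.card - j) A := fun {j} {B} hB hBj =>
    mem_nSum.2 ⟨A \ B, sdiff_subset, by rw [card_sdiff_of_subset hB, hBj],
      eq_sub_of_add_eq (sum_sdiff hB)⟩
  constructor
  · intro hc
    obtain ⟨B, hB, hBk, rfl⟩ := mem_nSum.1 hc
    simpa only [Nat.sub_sub_self hk] using compl hB hBk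
  · intro hc
    obtain ⟨B, hB, rfl, hBc⟩ := mem_nSum.1 hc
    simpa only [hBc, sub_sub_cancel] using compl hB rfl

end SumsOfDistinctElements

section Counting

lemma card_filter_snd_eq_le {α β : Type*} [DecidableEq α] [DecidableEq β]
    (s : Finset α) (t : Finset β) (f : α → β) :
    ((s ×ˢ t).filter fun p => p.2 = f p.1).card ≤ s.card := by
  refine (card_le_card fun p hp => ?_).trans (card_image_le (f := fun x => (x, f x)))
  simp only [mem_filter, mem_product] at hp
  exact mem_image.2 ⟨p.1, hp.1.1, Prod.ext rfl hp.2.symm⟩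

lemma card_filter_fst_eq_le {α β : Type*} [DecidableEq α] [DecidableEq β]
    (s : Finset α) (t : Finset β) (f : β → α) :
    ((s ×ˢ t).filter fun p => p.1 = f p.2).card ≤ t.card := by
  refine (card_le_card fun p hp => ?_).trans (card_image_le (f := fun y => (f y, y)))
  simp only [mem_filter, mem_product] at hp
  exact mem_image.2 ⟨p.2, hp.1.2, Prod.ext hp.2.symm rfl⟩

variable {G : Type*} [AddCommGroup G] [DecidableEq G]

/-- Of the `|A|²` pairs `(x, y)`, at most `|A| (|Q| - |A|)` have `c - x - y ∉ A` and at most `3 |A|`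
give a triple `x, y, c - x - y` with a repetition. -/
lemma mem_nSum_three_of_card {A Q : Finset G} {c : G} (hAQ : A ⊆ Q)
    (hQ : ∀ x ∈ A, ∀ y ∈ A, c - x - y ∈ Q) (hcard : Q.card + 4 ≤ 2 * A.card) :
    c ∈ nSum 3 A := by
  set bad := (A ×ˢ A).filter fun p : G × G =>
    p.2 = id p.1 ∨ p.2 = c - p.1 - p.1 ∨ p.1 = c - p.2 - p.2 ∨ c - p.1 - p.2 ∉ A
  have houtside : ((A ×ˢ A).filter fun p : G × G => c - p.1 - p.2 ∉ A).card
      ≤ A.card * (Q.card - A.card) := by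
    rw [← card_sdiff_of_subset hAQ, ← card_product]
    refine card_le_card_of_injOn (fun p => (p.1, c - p.1 - p.2)) (fun p hp => ?_) ?_
    · simp only [coe_filter, mem_product, Set.mem_ofPred_eq] at hp
      simp only [coe_product, Set.mem_prod, mem_coe, mem_sdiff]
      exact ⟨hp.1.1, hQ _ hp.1.1 _ hp.1.2, hp.2⟩
    · intro p _ q _ h
      simp only [Prod.mk.injEq] at h
      exact Prod.ext h.1 (by simpa [h.1] using h.2)
  have hlt : bad.card < (A ×ˢ A).card := by
    have hAQcard := card_le_card hAQ
    have key : A.card * (Q.card - A.card + 3) < A.card * A.card :=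
      Nat.mul_lt_mul_of_pos_left (by omega) (by omega)
    rw [mul_add] at key
    calc bad.card ≤ A.card + (A.card + (A.card + A.card * (Q.card - A.card))) := by
          simp only [bad, filter_or]
          refine (card_union_le _ _).trans (add_le_add (card_filter_snd_eq_le A A id) ?_)
          refine (card_union_le _ _).trans
            (add_le_add (card_filter_snd_eq_le A A fun x => c - x - x) ?_)
          exact (card_union_le _ _).trans
            (add_le_add (card_filter_fst_eq_le A A fun y => c - y - y) houtside)
      _ < A.card * A.card := by omega
      _ = (A ×ˢ A).card := card_product A A |>.symm
  obtain ⟨⟨x, y⟩, hxy, hgood⟩ := exists_mem_notMem_of_card_lt_card hlt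
  simp only [bad, mem_filter, hxy, true_and, not_or, not_not, id] at hgood
  obtain ⟨hyx, hy, hx, hz⟩ := hgood
  obtain ⟨hxA, hyA⟩ := mem_product.1 hxy
  have hzx : c - x - y ≠ x := fun h => hy <| by
    rw [sub_sub, sub_eq_iff_eq_add] at h
    rw [h]; abel
  have hyz : y ≠ c - x - y := fun h => hx <| by
    rw [sub_sub, eq_sub_iff_add_eq] at h
    rw [← h]; abel
  have := add_mem_nSum_succ hxA
    (add_mem_nSum_two (mem_erase.2 ⟨hyx, hyA⟩) (mem_erase.2 ⟨hzx, hz⟩) hyz)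
  rwa [add_sub_cancel, add_sub_cancel] at this

end Counting

section Coset

variable {G : Type*} [AddCommGroup G] {H : AddSubgroup G} {g c : G} {Q : Finset G}

lemma mem_vadd_coset_iff {a x : G} : x ∈ a +ᵥ (H : Set G) ↔ x - a ∈ H := by
  rw [mem_leftAddCoset_iff, neg_add_eq_sub, SetLike.mem_coe]

lemma mem_iff_sub_mem_of_coe_eq_vadd (hQ : (Q : Set G) = g +ᵥ (H : Set G)) (x : G) :
    x ∈ Q ↔ x - g ∈ H := by
  rw [← mem_coe, hQ, mem_vadd_coset_iff]

lemma sum_sub_card_nsmul_mem (hQ : ∀ x, x ∈ Q ↔ x - g ∈ H) {B : Finset G}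
    (hB : B ⊆ Q) : B.sum id - B.card • g ∈ H := by
  rw [← sum_const, ← sum_sub_distrib]
  exact H.sum_mem fun x hx => (hQ x).1 (hB hx)

lemma sub_nsmul_mem_iff_sum_sub (hQ : ∀ x, x ∈ Q ↔ x - g ∈ H) {j : ℕ} (hj : j ≤ Q.card) :
    c - (Q.card - j) • g ∈ H ↔ Q.sum id - c - j • g ∈ H := by
  have hn : Q.card • g = (Q.card - j) • g + j • g := by rw [← add_nsmul, Nat.sub_add_cancel hj]
  have : Q.sum id - c - j • g = (Q.sum id - Q.card • g) + -(c - (Q.card - j) • g) := by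
    rw [hn]; abel
  rw [this, add_mem_cancel_left (sum_sub_card_nsmul_mem hQ Subset.rfl), neg_mem_iff]

variable [DecidableEq G] {k : ℕ}

lemma sub_nsmul_mem_of_mem_nSum (hQ : ∀ x, x ∈ Q ↔ x - g ∈ H) (hc : c ∈ nSum k Q) :
    c - k • g ∈ H := by
  obtain ⟨B, hB, rfl, rfl⟩ := mem_nSum.1 hc
  exact sum_sub_card_nsmul_mem hQ hB

lemma mem_nSum_of_card_le (hQ : ∀ x, x ∈ Q ↔ x - g ∈ H) (hk : 3 ≤ k) {A : Finset G}
    (hAQ : A ⊆ Q) (hcard : Q.card + 2 * k ≤ 2 * A.card) (hc : c - k • g ∈ H) :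
    c ∈ nSum k A := by
  induction k, hk using Nat.le_induction generalizing A c with
  | base =>
    refine mem_nSum_three_of_card hAQ (fun x hx y hy => (hQ _).2 ?_) (by omega)
    have : c - x - y - g = c - 3 • g - (x - g) - (y - g) := by abel
    rw [this]
    exact H.sub_mem (H.sub_mem hc ((hQ x).1 (hAQ hx))) ((hQ y).1 (hAQ hy))
  | succ k _ ih =>
    obtain ⟨a, ha⟩ : A.Nonempty := card_pos.1 (by omega)
    have hca : c - a - k • g ∈ H := by
      have : c - a - k • g = c - (k + 1) • g - (a - g) := by rw [succ_nsmul]; abel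
      rw [this]
      exact H.sub_mem hc ((hQ a).1 (hAQ ha))
    have := add_mem_nSum_succ ha (ih ((erase_subset a A).trans hAQ)
      (by rw [card_erase_of_mem ha]; omega) hca)
    rwa [add_sub_cancel] at this

lemma two_nsmul_mem_nSum_two (hQ : ∀ x, x ∈ Q ↔ x - g ∈ H) {h : G} (hh : h ∈ H)
    (hh2 : h + h ≠ 0) : 2 • g ∈ nSum 2 Q := by
  have hne : g + h ≠ g - h := fun heq => hh2 (by rw [← sub_eq_zero.2 heq]; abel)
  have := add_mem_nSum_two ((hQ _).2 (by simpa using hh))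
    ((hQ _).2 (by simpa using H.neg_mem hh)) hne
  rwa [add_add_sub_cancel, ← two_nsmul] at this

lemma mem_nSum_two_of_ne (hQ : ∀ x, x ∈ Q ↔ x - g ∈ H) (hc : c - 2 • g ∈ H)
    (hne : c ≠ 2 • g) : c ∈ nSum 2 Q := by
  have hg : g ∈ Q := (hQ g).2 (by simp)
  have hcg : c - g ∈ Q := (hQ _).2 (by rwa [sub_sub, ← two_nsmul])
  have := add_mem_nSum_two hg hcg fun h => hne (by rw [two_nsmul]; nth_rw 2 [h]; abel)
  rwa [add_sub_cancel] at this

lemma two_nsmul_notMem_nSum_two (hQ : ∀ x, x ∈ Q ↔ x - g ∈ H)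
    (h2 : ∀ x ∈ H, x + x = 0) : 2 • g ∉ nSum 2 Q := by
  rintro hmem
  obtain ⟨a, ha, b, hb, hab, hsum⟩ := mem_nSum_two.1 hmem
  have hb' : b - g = -(a - g) := by
    rw [eq_neg_iff_add_eq_zero, show b - g + (a - g) = a + b - 2 • g by abel, hsum, sub_self]
  have ha' : a - g = -(a - g) := eq_neg_of_add_eq_zero_left (h2 _ ((hQ a).1 ha))
  exact hab (sub_left_injective (ha'.trans hb'.symm))

lemma mem_nSum_iff_of_two_mul_le (hQ : ∀ x, x ∈ Q ↔ x - g ∈ H) (hk1 : 1 ≤ k)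
    (hk : 2 * k ≤ Q.card) (h2 : k = 2 → ∃ h ∈ H, h + h ≠ 0) :
    c ∈ nSum k Q ↔ c - k • g ∈ H := by
  refine ⟨sub_nsmul_mem_of_mem_nSum hQ, fun hc => ?_⟩
  obtain rfl | rfl | hk3 : k = 1 ∨ k = 2 ∨ 3 ≤ k := by omega
  · rwa [mem_nSum_one, hQ, ← one_nsmul g]
  · obtain ⟨h, hh, hh2⟩ := h2 rfl
    by_cases hcg : c = 2 • g
    · exact hcg ▸ two_nsmul_mem_nSum_two hQ hh hh2
    · exact mem_nSum_two_of_ne hQ hc hcg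
  · exact mem_nSum_of_card_le hQ hk3 Subset.rfl (by omega) hc

lemma mem_nSum_two_iff_of_two_torsion (hQ : ∀ x, x ∈ Q ↔ x - g ∈ H)
    (h2 : ∀ x ∈ H, x + x = 0) : c ∈ nSum 2 Q ↔ c - 2 • g ∈ H ∧ c ≠ 2 • g :=
  ⟨fun hc => ⟨sub_nsmul_mem_of_mem_nSum hQ hc,
      fun h => two_nsmul_notMem_nSum_two hQ h2 (h ▸ hc)⟩,
    fun hc => mem_nSum_two_of_ne hQ hc.1 hc.2⟩

end Coset

theorem stmt13 {G : Type*} [AddCommGroup G] [DecidableEq G]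
    (H : AddSubgroup G) (g : G) (Q : Finset G)
    (hQ : (Q : Set G) = g +ᵥ (H : Set G))
    (k : ℕ) (hk1 : 1 ≤ k) (hk2 : k ≤ Q.card - 1) :
    (¬ ((k = 2 ∨ k = Q.card - 2) ∧ ∀ x ∈ H, x + x = 0) →
      (nSum k Q : Set G) = (k • g) +ᵥ (H : Set G)) ∧
    (((k = 2 ∨ k = Q.card - 2) ∧ ∀ x ∈ H, x + x = 0) →
      ∃ x ∈ (k • g) +ᵥ (H : Set G),
        (nSum k Q : Set G) = ((k • g) +ᵥ (H : Set G)) \ {x}) := by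
  have hQ' := mem_iff_sub_mem_of_coe_eq_vadd hQ
  refine ⟨fun hexc => Set.ext fun c => ?_, fun ⟨hk, h2⟩ => ?_⟩
  · have hH : k = 2 ∨ k = Q.card - 2 → ∃ h ∈ H, h + h ≠ 0 := by
      intro hk
      by_contra! h2
      exact hexc ⟨hk, h2⟩
    rw [mem_coe, mem_vadd_coset_iff]
    by_cases hsmall : 2 * k ≤ Q.card
    · exact mem_nSum_iff_of_two_mul_le hQ' hk1 hsmall fun hk => hH (.inl hk)
    · obtain ⟨j, hj, rfl⟩ : ∃ j ≤ Q.card, k = Q.card - j := ⟨Q.card - k, by omega, by omega⟩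
      rw [mem_nSum_card_sub hj, sub_nsmul_mem_iff_sum_sub hQ' hj]
      exact mem_nSum_iff_of_two_mul_le hQ' (by omega) (by omega)
        fun hj2 => hH (.inr (hj2 ▸ rfl))
  · rcases eq_or_ne k 2 with rfl | hk2'
    · refine ⟨2 • g, by simp [mem_vadd_coset_iff], Set.ext fun c => ?_⟩
      simp [mem_vadd_coset_iff, mem_nSum_two_iff_of_two_torsion hQ' h2]
    · obtain rfl : k = Q.card - 2 := hk.resolve_left hk2'
      refine ⟨Q.sum id - 2 • g, ?_, Set.ext fun c => ?_⟩
      · rw [mem_vadd_coset_iff, sub_nsmul_mem_iff_sum_sub hQ' (by omega), sub_sub_cancel, sub_self]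
        exact H.zero_mem
      · rw [mem_coe, Set.mem_sdiff, mem_vadd_coset_iff, Set.mem_singleton_iff,
          mem_nSum_card_sub (by omega), sub_nsmul_mem_iff_sum_sub hQ' (by omega),
          mem_nSum_two_iff_of_two_torsion hQ' h2, ne_eq, sub_eq_iff_comm, eq_comm]
end

section
/- Let A be a finite subset of an abelian group G with 0 ∈ A, |A| ≥ 3, and |2∧A| = |A| − 1. Then 2y = 0 for every y ∈ A. -/
open Finset Pointwise

lemma mem_twoSum_s17 {G : Type*} [AddCommGroup G] [DecidableEq G] {A : Finset G} {t : G} :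
    t ∈ twoSum A ↔ ∃ a ∈ A, ∃ b ∈ A, a ≠ b ∧ a + b = t := by
  simp only [twoSum, Finset.mem_image, Finset.mem_filter, Finset.mem_product, Prod.exists]
  constructor
  · rintro ⟨a, b, ⟨⟨ha, hb⟩, hne⟩, rfl⟩
    exact ⟨a, ha, b, hb, hne, rfl⟩
  · rintro ⟨a, ha, b, hb, hne, rfl⟩
    exact ⟨a, b, ⟨⟨ha, hb⟩, hne⟩, rfl⟩

lemma twoSum_eq_image {G : Type*} [AddCommGroup G] [DecidableEq G] {A : Finset G}
    (h : (twoSum A).card = A.card - 1) {a : G} (ha : a ∈ A) :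
    (A.erase a).image (fun x => a + x) = twoSum A := by
  have hsub : (A.erase a).image (fun x => a + x) ⊆ twoSum A := by
    intro t ht
    obtain ⟨x, hx, rfl⟩ := Finset.mem_image.mp ht
    obtain ⟨hxa, hxA⟩ := Finset.mem_erase.mp hx
    exact mem_twoSum_s17.mpr ⟨a, ha, x, hxA, fun he => hxa he.symm, rfl⟩
  refine Finset.eq_of_subset_of_card_le hsub ?_
  have hcard : ((A.erase a).image (fun x => a + x)).card = A.card - 1 := by
    rw [Finset.card_image_of_injective _ (add_right_injective a),
      Finset.card_erase_of_mem ha]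
  rw [h, hcard]

theorem stmt17 {G : Type*} [AddCommGroup G] [DecidableEq G] (A : Finset G)
    (h0 : (0 : G) ∈ A) (hA : 3 ≤ A.card) (h : (twoSum A).card = A.card - 1) :
    ∀ y ∈ A, y + y = 0 := by
  -- surjectivity fact
  have F2 : ∀ a ∈ A, ∀ t ∈ twoSum A, ∃ x ∈ A, x ≠ a ∧ a + x = t := by
    intro a ha t ht
    rw [← twoSum_eq_image h ha] at ht
    obtain ⟨x, hx, hxt⟩ := Finset.mem_image.mp ht
    obtain ⟨hxa, hxA⟩ := Finset.mem_erase.mp hx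
    exact ⟨x, hxA, hxa, hxt⟩
  -- twoSum A ⊆ A and 0 ∉ twoSum A
  have hsubA : ∀ t ∈ twoSum A, t ∈ A := by
    intro t ht
    obtain ⟨x, hxA, _, hxt⟩ := F2 0 h0 t ht
    rw [zero_add] at hxt
    exact hxt ▸ hxA
  have h0T : (0 : G) ∉ twoSum A := by
    intro ht
    obtain ⟨x, _, hx0, hxt⟩ := F2 0 h0 0 ht
    rw [zero_add] at hxt
    exact hx0 hxt
  have hdiag : ∀ b ∈ A, b + b ∉ twoSum A := by
    intro b hb hbt
    obtain ⟨x, _, hxb, hxt⟩ := F2 b hb (b + b) hbt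
    exact hxb (add_left_cancel hxt)
  intro y hy
  by_contra hyy
  have hy0 : y ≠ 0 := by rintro rfl; simp at hyy
  -- find z ∈ A, z ≠ 0, z ≠ y
  have hz : ∃ z ∈ A, z ≠ 0 ∧ z ≠ y := by
    by_contra hc
    push_neg at hc
    have hsub : A ⊆ {0, y} := by
      intro x hx
      rcases eq_or_ne x 0 with rfl | hx0
      · simp
      · simp [hc x hx hx0]
    have := Finset.card_le_card hsub
    have h2 : ({0, y} : Finset G).card ≤ 2 := Finset.card_insert_le _ _ |>.trans (by simp)
    omega
  obtain ⟨z, hzA, hz0, hzy⟩ := hz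
  -- w = y + z ∈ A
  have hwT : y + z ∈ twoSum A := mem_twoSum_s17.mpr ⟨y, hy, z, hzA, fun he => hzy he.symm, rfl⟩
  have hwA : y + z ∈ A := hsubA _ hwT
  have hwy : y + z ≠ y := fun he => hz0 (add_eq_left.mp he)
  -- u = y + (y+z) ∈ A
  have huT : y + (y + z) ∈ twoSum A :=
    mem_twoSum_s17.mpr ⟨y, hy, y + z, hwA, fun he => hwy he.symm, rfl⟩
  have huA : y + (y + z) ∈ A := hsubA _ huT
  have huz : y + (y + z) ≠ z := fun he => by
    rw [← add_assoc] at he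
    exact hyy (add_eq_right.mp he)
  -- (y+(y+z)) + z = (y+z)+(y+z) ∈ twoSum A, contradicting hdiag
  have : (y + z) + (y + z) ∈ twoSum A := by
    have := mem_twoSum_s17.mpr ⟨y + (y + z), huA, z, hzA, huz, rfl⟩
    convert this using 1
    abel
  exact hdiag _ hwA this
end
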